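/- Let Φ : ℝⁿ × ℝᵐ → ℝ be differentiable with x ↦ Φ(x,y) being μ_x-strongly convex for every y (μ_x > 0), and ∇_x Φ Lipschitz in y with constant L_{xy} > 0. Fix ε ∈ (0, 1/L_{xy}) and define h : ℝⁿ × ℝᵐ → ℝᵐ × ℝⁿ by h(x,y) = (y, ε ∇_x Φ(x,y)). Then for all (x,y), (x̄,ȳ): ‖h(x,y) − h(x̄,ȳ)‖² ≥ (ε² μ_x² / 2)‖x − x̄‖² + (1 − ε² L_{xy}²)‖y − ȳ‖². In particular, with C_ε = √(min{ε²μ_x²/2, 1 − ε²L_{xy}²}) > 0, h is an expansive map: ‖h(x,y) − h(x̄,ȳ)‖ ≥ C_ε ‖(x,y) − (x̄,ȳ)‖. -/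

import Mathlib

/-!
Strong convexity makes `∇ₓΦ(·, y)` strongly monotone, so `μ‖x - x̄‖ ≤ ‖∇ₓΦ(x, y) - ∇ₓΦ(x̄, y)‖`,
and with the Lipschitz bound in `y` this gives `ε‖∇ₓΦ(x, y) - ∇ₓΦ(x̄, ȳ)‖ ≥ A - B` where
`A = εμ‖x - x̄‖` and `B = εL‖y - ȳ‖`. Since `(A - B)² ≥ A²/2 - B²`, adding `‖y - ȳ‖²` yields the
weighted lower bound, and bounding both weights below by their minimum gives expansiveness.
-/

open RealInnerProductSpace Set AffineMap

theorem ConvexOn.add_fderiv_sub_le {E : Type*} [NormedAddCommGroup E] [NormedSpace ℝ E]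
    {s : Set E} {f : E → ℝ} {f' : E →L[ℝ] ℝ} {u v : E} (hf : ConvexOn ℝ s f)
    (hu : u ∈ s) (hv : v ∈ s) (hf' : HasFDerivAt f f' u) :
    f u + f' (v - u) ≤ f v := by
  have hline : ConvexOn ℝ (Icc 0 1) (f ∘ lineMap (k := ℝ) u v) :=
    (hf.comp_affineMap (lineMap u v)).subset (fun t ht ↦ hf.1.lineMap_mem hu hv ht) (convex_Icc 0 1)
  have hf'0 : HasFDerivAt f f' (lineMap u v (0 : ℝ)) := by simpa using hf'
  have hderiv : HasDerivAt (f ∘ lineMap (k := ℝ) u v) (f' (v - u)) 0 :=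
    hf'0.comp_hasDerivAt _ hasDerivAt_lineMap
  have hslope := hline.le_slope_of_hasDerivAt (by simp) (by simp) zero_lt_one hderiv
  rw [slope_def_field] at hslope
  simp only [Function.comp_apply, lineMap_apply_zero, lineMap_apply_one, sub_zero, div_one]
    at hslope
  linarith

theorem StrongConvexOn.add_fderiv_sub_add_le {E : Type*} [NormedAddCommGroup E]
    [InnerProductSpace ℝ E]
    {s : Set E} {f : E → ℝ} {f' : E →L[ℝ] ℝ} {μ : ℝ} {u v : E} (hf : StrongConvexOn s μ f)
    (hu : u ∈ s) (hv : v ∈ s) (hf' : HasFDerivAt f f' u) :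
    f u + f' (v - u) + μ / 2 * ‖v - u‖ ^ 2 ≤ f v := by
  have hsq : HasFDerivAt (fun x ↦ μ / 2 * ‖x‖ ^ 2) ((μ / 2) • (2 • innerSL ℝ u)) u :=
    (hasStrictFDerivAt_norm_sq u).hasFDerivAt.const_mul (μ / 2)
  have := (strongConvexOn_iff_convex.mp hf).add_fderiv_sub_le hu hv (hf'.sub hsq)
  simp only [sub_apply, smul_apply, innerSL_apply_apply, smul_eq_mul, nsmul_eq_mul,
    inner_sub_right, real_inner_self_eq_norm_sq] at this
  rw [norm_sub_sq_real, real_inner_comm]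
  linarith

theorem StrongConvexOn.mul_norm_sub_sq_le_inner_gradient_sub {E : Type*} [NormedAddCommGroup E]
    [InnerProductSpace ℝ E] [CompleteSpace E] {s : Set E} {f : E → ℝ} {μ : ℝ} {u v gu gv : E}
    (hf : StrongConvexOn s μ f) (hu : u ∈ s) (hv : v ∈ s)
    (hgu : HasGradientAt f gu u) (hgv : HasGradientAt f gv v) :
    μ * ‖v - u‖ ^ 2 ≤ ⟪gv - gu, v - u⟫ := by
  have huv := hf.add_fderiv_sub_add_le hu hv (hasGradientAt_iff_hasFDerivAt.mp hgu)
  have hvu := hf.add_fderiv_sub_add_le hv hu (hasGradientAt_iff_hasFDerivAt.mp hgv)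
  simp only [InnerProductSpace.toDual_apply_apply] at huv hvu
  rw [norm_sub_rev u v, ← neg_sub v u, inner_neg_right] at hvu
  rw [inner_sub_left]
  linarith

theorem StrongConvexOn.mul_norm_sub_le_norm_gradient_sub {E : Type*} [NormedAddCommGroup E]
    [InnerProductSpace ℝ E] [CompleteSpace E] {s : Set E} {f : E → ℝ} {μ : ℝ} {u v gu gv : E}
    (hf : StrongConvexOn s μ f) (hu : u ∈ s) (hv : v ∈ s)
    (hgu : HasGradientAt f gu u) (hgv : HasGradientAt f gv v) :
    μ * ‖v - u‖ ≤ ‖gv - gu‖ := by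
  rcases (norm_nonneg (v - u)).eq_or_lt with h | h
  · rw [← h, mul_zero]
    exact norm_nonneg _
  refine le_of_mul_le_mul_right ?_ h
  calc μ * ‖v - u‖ * ‖v - u‖ = μ * ‖v - u‖ ^ 2 := by ring
    _ ≤ ⟪gv - gu, v - u⟫ := hf.mul_norm_sub_sq_le_inner_gradient_sub hu hv hgu hgv
    _ ≤ ‖gv - gu‖ * ‖v - u‖ := real_inner_le_norm _ _

theorem half_sq_sub_sq_le_sq_of_sub_le {a b r : ℝ} (ha : 0 ≤ a) (hb : 0 ≤ b) (hr : 0 ≤ r)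
    (h : a - b ≤ r) : a ^ 2 / 2 - b ^ 2 ≤ r ^ 2 := by
  rcases le_or_gt a b with hab | hab
  · nlinarith
  · nlinarith [sq_nonneg (a - 2 * b)]

theorem sqrt_min_mul_sqrt_add_le {α β p q s : ℝ} (hp : 0 ≤ p) (hq : 0 ≤ q)
    (h : α * p + β * q ≤ s) : √(min α β) * √(p + q) ≤ √s := by
  rw [← Real.sqrt_mul' _ (add_nonneg hp hq)]
  refine Real.sqrt_le_sqrt (le_trans ?_ h)
  rw [mul_add]
  gcongr
  exacts [min_le_left _ _, min_le_right _ _]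

theorem weighted_sq_le_sq_add_norm_smul_gradient_sub_sq {E F : Type*} [NormedAddCommGroup E]
    [InnerProductSpace ℝ E] [CompleteSpace E] [SeminormedAddCommGroup F]
    {Φ : E → F → ℝ} {G : E → F → E} {μ L ε : ℝ} (hμ : 0 ≤ μ) (hL : 0 ≤ L) (hε : 0 ≤ ε)
    (hG : ∀ x y, HasGradientAt (fun x' ↦ Φ x' y) (G x y) x)
    (hsc : ∀ y, StrongConvexOn univ μ (fun x ↦ Φ x y))
    (hlip : ∀ x y ybar, ‖G x y - G x ybar‖ ≤ L * ‖y - ybar‖) (x xbar : E) (y ybar : F) :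
    ε ^ 2 * μ ^ 2 / 2 * ‖x - xbar‖ ^ 2 + (1 - ε ^ 2 * L ^ 2) * ‖y - ybar‖ ^ 2
      ≤ ‖y - ybar‖ ^ 2 + ‖ε • G x y - ε • G xbar ybar‖ ^ 2 := by
  have hgrad : μ * ‖x - xbar‖ - L * ‖y - ybar‖ ≤ ‖G x y - G xbar ybar‖ := by
    have hx := (hsc y).mul_norm_sub_le_norm_gradient_sub trivial trivial (hG xbar y) (hG x y)
    have htri := norm_sub_le_norm_sub_add_norm_sub (G x y) (G xbar ybar) (G xbar y)
    rw [norm_sub_rev (G xbar ybar)] at htri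
    linarith [hlip xbar y ybar]
  have hscaled : ε * μ * ‖x - xbar‖ - ε * L * ‖y - ybar‖ ≤ ‖ε • G x y - ε • G xbar ybar‖ := by
    rw [← smul_sub, norm_smul, Real.norm_of_nonneg hε]
    nlinarith
  have := half_sq_sub_sq_le_sq_of_sub_le (by positivity) (by positivity) (norm_nonneg _) hscaled
  linear_combination this

/-- For `ε ∈ (0, 1/Lxy)`, the map `h(x,y) = (y, ε ∇ₓΦ(x,y))` satisfies
`‖h(x,y) − h(x̄,ȳ)‖² ≥ (ε²μx²/2)‖x−x̄‖² + (1−ε²Lxy²)‖y−ȳ‖²`, and hence is expansive with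
constant `C_ε = √(min{ε²μx²/2, 1−ε²Lxy²})`.  Here the product norm satisfies
`‖(x,y)‖² = ‖x‖² + ‖y‖²`, so the claims are stated componentwise. -/
theorem implicit_map_expansive {n m : ℕ}
    (μx Lxy ε : ℝ) (hμx : 0 < μx) (hLxy : 0 < Lxy) (hε0 : 0 < ε) (hε1 : ε < 1 / Lxy)
    (Φ : EuclideanSpace ℝ (Fin n) → EuclideanSpace ℝ (Fin m) → ℝ)
    (Gx : EuclideanSpace ℝ (Fin n) → EuclideanSpace ℝ (Fin m) → EuclideanSpace ℝ (Fin n))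
    (hGx : ∀ x y, HasGradientAt (fun x' => Φ x' y) (Gx x y) x)
    (hsc : ∀ y, StrongConvexOn Set.univ μx (fun x => Φ x y))
    (hlip : ∀ x y ybar, ‖Gx x y - Gx x ybar‖ ≤ Lxy * ‖y - ybar‖) :
    (∀ x xbar : EuclideanSpace ℝ (Fin n), ∀ y ybar : EuclideanSpace ℝ (Fin m),
      ε ^ 2 * μx ^ 2 / 2 * ‖x - xbar‖ ^ 2 + (1 - ε ^ 2 * Lxy ^ 2) * ‖y - ybar‖ ^ 2
        ≤ ‖y - ybar‖ ^ 2 + ‖ε • Gx x y - ε • Gx xbar ybar‖ ^ 2) ∧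
    (0 < Real.sqrt (min (ε ^ 2 * μx ^ 2 / 2) (1 - ε ^ 2 * Lxy ^ 2))) ∧
    (∀ x xbar : EuclideanSpace ℝ (Fin n), ∀ y ybar : EuclideanSpace ℝ (Fin m),
      Real.sqrt (min (ε ^ 2 * μx ^ 2 / 2) (1 - ε ^ 2 * Lxy ^ 2)) *
          Real.sqrt (‖x - xbar‖ ^ 2 + ‖y - ybar‖ ^ 2)
        ≤ Real.sqrt (‖y - ybar‖ ^ 2 + ‖ε • Gx x y - ε • Gx xbar ybar‖ ^ 2)) := by
  have hbound := weighted_sq_le_sq_add_norm_smul_gradient_sub_sq hμx.le hLxy.le hε0.le hGx hsc hlip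
  have hεL : ε * Lxy < 1 := (lt_div_iff₀ hLxy).mp hε1
  have hεL_sq : 0 < 1 - ε ^ 2 * Lxy ^ 2 := by nlinarith [mul_pos hε0 hLxy]
  refine ⟨hbound, Real.sqrt_pos.mpr (lt_min (by positivity) hεL_sq), fun x xbar y ybar ↦ ?_⟩
  exact sqrt_min_mul_sqrt_add_le (sq_nonneg _) (sq_nonneg _) (hbound x xbar y ybar)
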